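/- Let n ≥ 3, let U be the n×n Fourier matrix with entries u_{j,k} = exp(2πi·j·k/n)/√n, and let a_{i,j} = 1/√2 for all i ≠ j, with associated orthonormal LDOI basis vectors φ_{i,j}. Define P_{i,i} = 0 for all i, and for i ≠ j define P_{i,j} = (1/2)·(E_{(i,j),(i,j)} + E_{(j,i),(j,i)}) + (s_{i,j}/(2n−2))·(E_{(i,j),(j,i)} + E_{(j,i),(i,j)}) + (1/(2n−2))·(E_{(i,i),(i,i)} + E_{(j,j),(j,j)}), where s_{i,j} = 1 if i < j and s_{i,j} = −1 if i > j, and E_{r,c} is the matrix unit with a 1 in row r and column c. Then (P_{i,j})_{1≤i,j≤n} is a PPT POVM, ⟨φ_{i,j}, P_{i,j} φ_{i,j}⟩ = n/(2n−2) for all i ≠ j, and its success probability for the uniform ensemble equals exactly 1/2; moreover, every PPT POVM for this ensemble has success probability at most 1/2. -/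

import Mathlib

open Matrix Kronecker BigOperators
open scoped ComplexOrder

/-- The vectors of the orthonormal LDOI basis associated to `(U, A)`:
`φ_{i,i} = ∑_k u_{i,k} e_k ⊗ e_k`;
for `i < j`, `φ_{i,j} = a_{i,j} e_i ⊗ e_j + conj(a_{j,i}) e_j ⊗ e_i` and
`φ_{j,i} = a_{j,i} e_i ⊗ e_j − conj(a_{i,j}) e_j ⊗ e_i`. -/
noncomputable def ldoiBasis {n : ℕ} (U A : Matrix (Fin n) (Fin n) ℂ) (i j : Fin n) :
    (Fin n × Fin n) → ℂ :=
  if i = j then (fun p => if p.1 = p.2 then U i p.1 else 0)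
  else if i < j then
    (fun p => if p = (i, j) then A i j else if p = (j, i) then (starRingEnd ℂ) (A j i) else 0)
  else
    (fun p => if p = (j, i) then A i j else if p = (i, j) then -(starRingEnd ℂ) (A j i) else 0)

/-- The partial transpose on the first factor: `T₁(M)_{(i,k),(j,l)} = M_{(j,k),(i,l)}`. -/
def ptranspose {n : ℕ} (M : Matrix (Fin n × Fin n) (Fin n × Fin n) ℂ) :
    Matrix (Fin n × Fin n) (Fin n × Fin n) ℂ :=
  Matrix.of fun p q => M (q.1, p.2) (p.1, q.2)

/-- The `n × n` Fourier matrix, `u_{j,k} = exp(2πi·j·k/n)/√n`. -/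
noncomputable def fourierU (n : ℕ) : Matrix (Fin n) (Fin n) ℂ :=
  fun j k => Complex.exp (2 * (Real.pi : ℂ) * Complex.I * ((j : ℕ) : ℂ) * ((k : ℕ) : ℂ) / n) /
    (Real.sqrt n : ℂ)

/-- The matrix `A` with all entries `1/√2`. -/
noncomputable def halfA (n : ℕ) : Matrix (Fin n) (Fin n) ℂ :=
  fun _ _ => ((Real.sqrt 2 : ℝ) : ℂ)⁻¹

/-- The PPT measurement operators from Example 5 (`mixed Bell basis`): `P_{i,i} = 0` and, for
`i ≠ j`,
`P_{i,j} = (1/2)(E_{(i,j),(i,j)} + E_{(j,i),(j,i)}) + (s_{i,j}/(2n−2))(E_{(i,j),(j,i)} +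
E_{(j,i),(i,j)}) + (1/(2n−2))(E_{(i,i),(i,i)} + E_{(j,j),(j,j)})`
with `s_{i,j} = 1` if `i < j` and `−1` if `i > j`. -/
noncomputable def fourierP (n : ℕ) (i j : Fin n) :
    Matrix (Fin n × Fin n) (Fin n × Fin n) ℂ :=
  if i = j then 0 else
    (1 / 2 : ℂ) • (Matrix.single (i, j) (i, j) 1 +
        Matrix.single (j, i) (j, i) 1) +
      (((if i < j then 1 else -1) : ℂ) / (2 * (n : ℂ) - 2)) •
        (Matrix.single (i, j) (j, i) 1 + Matrix.single (j, i) (i, j) 1) +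
      (1 / (2 * (n : ℂ) - 2)) • (Matrix.single (i, i) (i, i) 1 +
        Matrix.single (j, j) (j, j) 1)

/-!
Everything rests on the partial transpose. For `i ≠ j`, both `P_{i,j}` and `T₁(P_{i,j})` are
sums of two blocks `a (E_pp + E_qq) + b (E_pq + E_qp)` with `|b| ≤ a`, hence positive; in
`∑ P_{i,j}` the terms with coefficient `s_{i,j}/(2n-2)` cancel by antisymmetry, and the diagonal
terms add up to the identity because `(n-1)/(2n-2) = 1/2`.

For the bound, positivity of `T₁(P)` gives `2 |P_{(a,b),(c,d)}| ≤ P_{(c,b),(c,b)} + P_{(a,d),(a,d)}`.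
Hence if a vector `x`, read as an `n × n` matrix, has all row and column `ℓ¹`-norms at most `κ`,
then `Re ⟨x, P x⟩ ≤ κ² Re tr P`. Every vector of the Fourier LDOI basis satisfies this with
`κ = 1/√2`, so the success probability is at most `(1/n²) · (1/2) · tr (∑ P_{i,j}) = 1/2`.
-/

lemma Fintype.sum_ite_eq_zero_else {ι M : Type*} [Fintype ι] [DecidableEq ι] [AddCommGroup M]
    (i : ι) (v : ι → M) : ∑ j, (if i = j then 0 else v j) = ∑ j, v j - v i := by
  rw [← Finset.sum_erase_eq_sub (Finset.mem_univ i), Finset.sum_ite, Finset.sum_const_zero,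
    zero_add, Finset.filter_ne]

lemma sum_sum_mul_apply_swap_mul {α β R : Type*} [Fintype α] [Fintype β] [CommSemiring R]
    (y w : α × β → R) :
    ∑ p : α × β, ∑ q : α × β, y p * w (q.1, p.2) * y q =
      ∑ r : α × β, w r * (∑ a, y (a, r.2)) * ∑ d, y (r.1, d) := by
  simp only [Fintype.sum_prod_type, Finset.sum_mul, Finset.mul_sum]
  calc ∑ a, ∑ b, ∑ c, ∑ d, y (a, b) * w (c, b) * y (c, d)
      = ∑ b, ∑ c, ∑ a, ∑ d, y (a, b) * w (c, b) * y (c, d) :=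
        Finset.sum_comm.trans (Finset.sum_congr rfl fun _ _ => Finset.sum_comm)
    _ = ∑ c, ∑ b, ∑ d, ∑ a, w (c, b) * y (a, b) * y (c, d) := by
        rw [Finset.sum_comm]
        refine Finset.sum_congr rfl fun c _ => Finset.sum_congr rfl fun b _ => ?_
        rw [Finset.sum_comm]
        simp only [mul_comm (y _)]

lemma re_star_dotProduct_mulVec_le_sum_norm {ι : Type*} [Fintype ι] (N : Matrix ι ι ℂ)
    (x : ι → ℂ) : (star x ⬝ᵥ (N *ᵥ x)).re ≤ ∑ p, ∑ q, ‖x p‖ * ‖N p q‖ * ‖x q‖ := by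
  calc (star x ⬝ᵥ (N *ᵥ x)).re ≤ ‖∑ p, ∑ q, star (x p) * (N p q * x q)‖ :=
        (Complex.re_le_norm _).trans_eq (by simp only [dotProduct, mulVec, Finset.mul_sum,
          Pi.star_apply])
    _ ≤ ∑ p, ∑ q, ‖star (x p) * (N p q * x q)‖ :=
        (norm_sum_le _ _).trans (Finset.sum_le_sum fun p _ => norm_sum_le _ _)
    _ = ∑ p, ∑ q, ‖x p‖ * ‖N p q‖ * ‖x q‖ := by
        simp only [norm_mul, norm_star, mul_assoc]

lemma Matrix.PosSemidef.two_mul_norm_apply_le {ι : Type*} [Fintype ι] [DecidableEq ι]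
    {N : Matrix ι ι ℂ} (hN : N.PosSemidef) (p q : ι) :
    2 * ‖N p q‖ ≤ (N p p).re + (N q q).re := by
  set z := N p q
  -- test `N` on `e_p + v e_q`, where the phase `v` makes `v z = -‖z‖`
  set v : ℂ := -Complex.exp (-((Complex.arg z : ℂ) * Complex.I))
  have hv : star v * v = 1 := by
    rw [Complex.star_def, Complex.conj_mul', norm_neg, Complex.norm_exp]; simp
  have hvz : v * z = -‖z‖ := by
    have := Complex.exp_ne_zero ((Complex.arg z : ℂ) * Complex.I)
    nth_rw 1 [← Complex.norm_mul_exp_arg_mul_I z]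
    simp only [v, Complex.exp_neg]
    field_simp
  have hvz' : star v * star z = -‖z‖ := by
    simpa [Complex.star_def, ← map_mul, mul_comm] using congrArg star hvz
  have hquad : star (Pi.single p 1 + Pi.single q v) ⬝ᵥ (N *ᵥ (Pi.single p 1 + Pi.single q v)) =
      N p p + N q q - 2 * ‖z‖ := by
    simp only [star_add, mulVec_add, dotProduct_add, add_dotProduct, mulVec_single, Pi.star_single,
      single_dotProduct, star_one, Pi.smul_apply, col_apply, op_smul_eq_mul,
      ← hN.isHermitian.apply q p]
    linear_combination hvz' + hvz + N q q * hv
  have h := hN.re_dotProduct_nonneg (Pi.single p 1 + Pi.single q v)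
  rw [hquad] at h
  simpa using h

section PairBlock

variable {ι : Type*} [DecidableEq ι]

def pairBlock (p q : ι) (a b : ℝ) : Matrix ι ι ℂ :=
  (a : ℂ) • (single p p 1 + single q q 1) + (b : ℂ) • (single p q 1 + single q p 1)

lemma pairBlock_isHermitian (p q : ι) (a b : ℝ) : (pairBlock p q a b).IsHermitian := by
  simp only [IsHermitian, pairBlock, conjTranspose_add, conjTranspose_smul, conjTranspose_single,
    star_one, Complex.star_def, Complex.conj_ofReal, add_comm (single q p _)]

variable [Fintype ι]

lemma star_dotProduct_single_mulVec (x : ι → ℂ) (p q : ι) :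
    star x ⬝ᵥ (single p q 1 *ᵥ x) = star (x p) * x q := by
  simp [single_mulVec, dotProduct, Function.update_apply, Pi.star_apply]

lemma star_dotProduct_pairBlock_mulVec (p q : ι) (a b : ℝ) (x : ι → ℂ) :
    star x ⬝ᵥ (pairBlock p q a b *ᵥ x) =
      a * (star (x p) * x p + star (x q) * x q) + b * (star (x p) * x q + star (x q) * x p) := by
  simp only [pairBlock, add_mulVec, smul_mulVec, dotProduct_add, dotProduct_smul,
    star_dotProduct_single_mulVec, smul_eq_mul]

lemma pairBlock_posSemidef (p q : ι) {a b : ℝ} (h : |b| ≤ a) : (pairBlock p q a b).PosSemidef := by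
  refine .of_dotProduct_mulVec_nonneg (pairBlock_isHermitian p q a b) fun x => ?_
  rw [star_dotProduct_pairBlock_mulVec, Complex.nonneg_iff]
  obtain ⟨hb₁, hb₂⟩ := abs_le.mp h
  simp only [Complex.add_re, Complex.mul_re, Complex.ofReal_re, Complex.ofReal_im,
    Complex.star_def, Complex.conj_re, Complex.conj_im, Complex.add_im, Complex.mul_im]
  constructor
  · nlinarith [sq_nonneg ((x p).re - (x q).re), sq_nonneg ((x p).re + (x q).re),
      sq_nonneg ((x p).im - (x q).im), sq_nonneg ((x p).im + (x q).im)]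
  · ring

end PairBlock

section PartialTranspose

variable {n : ℕ}

lemma ptranspose_zero : ptranspose (0 : Matrix (Fin n × Fin n) (Fin n × Fin n) ℂ) = 0 := rfl

lemma ptranspose_add (M N : Matrix (Fin n × Fin n) (Fin n × Fin n) ℂ) :
    ptranspose (M + N) = ptranspose M + ptranspose N := rfl

lemma ptranspose_smul (c : ℂ) (M : Matrix (Fin n × Fin n) (Fin n × Fin n) ℂ) :
    ptranspose (c • M) = c • ptranspose M := rfl

lemma ptranspose_single (a b c d : Fin n) (v : ℂ) :
    ptranspose (single (a, b) (c, d) v) = single (c, b) (a, d) v := by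
  ext p q
  simp only [ptranspose, single_apply, of_apply, Prod.ext_iff]
  exact if_congr (by tauto) rfl rfl

lemma two_mul_norm_apply_le_of_ptranspose {M : Matrix (Fin n × Fin n) (Fin n × Fin n) ℂ}
    (hM : (ptranspose M).PosSemidef) (p q : Fin n × Fin n) :
    2 * ‖M p q‖ ≤ (M (q.1, p.2) (q.1, p.2)).re + (M (p.1, q.2) (p.1, q.2)).re :=
  hM.two_mul_norm_apply_le (q.1, p.2) (p.1, q.2)

lemma re_star_dotProduct_mulVec_le_of_ptranspose
    {M : Matrix (Fin n × Fin n) (Fin n × Fin n) ℂ} (hM : (ptranspose M).PosSemidef)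
    {x : Fin n × Fin n → ℂ} {κ : ℝ} (hcol : ∀ b, ∑ a, ‖x (a, b)‖ ≤ κ)
    (hrow : ∀ a, ∑ b, ‖x (a, b)‖ ≤ κ) :
    (star x ⬝ᵥ (M *ᵥ x)).re ≤ κ ^ 2 * (trace M).re := by
  set m : Fin n × Fin n → ℝ := fun r => (M r r).re
  have hm (r : Fin n × Fin n) : 0 ≤ m r := (Complex.nonneg_iff.mp (hM.diag_nonneg (i := r))).1
  set A : Fin n × Fin n → Fin n × Fin n → ℝ := fun p q => ‖x p‖ * m (q.1, p.2) * ‖x q‖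
  have hA : ∑ p, ∑ q, A p q ≤ κ ^ 2 * (trace M).re := by
    rw [sum_sum_mul_apply_swap_mul, trace, Complex.re_sum, Finset.mul_sum]
    refine Finset.sum_le_sum fun r _ => ?_
    have hκ : 0 ≤ κ := (Finset.sum_nonneg fun a _ => norm_nonneg _).trans (hcol r.2)
    calc m r * (∑ a, ‖x (a, r.2)‖) * ∑ b, ‖x (r.1, b)‖ ≤ m r * κ * κ :=
          mul_le_mul (mul_le_mul_of_nonneg_left (hcol r.2) (hm r)) (hrow r.1)
            (Finset.sum_nonneg fun _ _ => norm_nonneg _) (mul_nonneg (hm r) hκ)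
      _ = κ ^ 2 * (M r r).re := by ring
  calc (star x ⬝ᵥ (M *ᵥ x)).re ≤ ∑ p, ∑ q, ‖x p‖ * ‖M p q‖ * ‖x q‖ :=
        re_star_dotProduct_mulVec_le_sum_norm M x
    _ ≤ ∑ p, ∑ q, (A p q + A q p) / 2 := by
        gcongr with p _ q _
        have := two_mul_norm_apply_le_of_ptranspose hM p q
        have hpq := mul_nonneg (norm_nonneg (x p)) (norm_nonneg (x q))
        simp only [A]
        nlinarith
    _ = ∑ p, ∑ q, A p q := by
        simp only [add_div, Finset.sum_add_distrib]
        rw [Finset.sum_comm (f := fun p q => A q p / 2)]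
        simp only [← Finset.sum_add_distrib, add_halves]
    _ ≤ κ ^ 2 * (trace M).re := hA

end PartialTranspose

noncomputable def successProb {n : ℕ} (φ : Fin n → Fin n → Fin n × Fin n → ℂ)
    (P : Fin n → Fin n → Matrix (Fin n × Fin n) (Fin n × Fin n) ℂ) : ℝ :=
  (1 / (n : ℝ) ^ 2) * ∑ i, ∑ j, (star (φ i j) ⬝ᵥ (P i j *ᵥ φ i j)).re

lemma successProb_le_of_ptranspose {n : ℕ} {φ : Fin n → Fin n → Fin n × Fin n → ℂ}
    {P : Fin n → Fin n → Matrix (Fin n × Fin n) (Fin n × Fin n) ℂ}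
    (hsum : ∑ i, ∑ j, P i j = 1) (hP : ∀ i j, (ptranspose (P i j)).PosSemidef) {κ : ℝ}
    (hcol : ∀ i j b, ∑ a, ‖φ i j (a, b)‖ ≤ κ) (hrow : ∀ i j a, ∑ b, ‖φ i j (a, b)‖ ≤ κ) :
    successProb φ P ≤ κ ^ 2 := by
  have hbound : ∑ i, ∑ j, (star (φ i j) ⬝ᵥ (P i j *ᵥ φ i j)).re ≤ κ ^ 2 * n ^ 2 :=
    calc ∑ i, ∑ j, (star (φ i j) ⬝ᵥ (P i j *ᵥ φ i j)).re
        ≤ ∑ i, ∑ j, κ ^ 2 * (trace (P i j)).re := by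
          gcongr with i _ j _
          exact re_star_dotProduct_mulVec_le_of_ptranspose (hP i j) (hcol i j) (hrow i j)
      _ = κ ^ 2 * n ^ 2 := by
          simp only [← Finset.mul_sum, ← Complex.re_sum, ← trace_sum, hsum, trace_one,
            Fintype.card_prod, Fintype.card_fin, Complex.natCast_re]
          push_cast
          ring
  rcases eq_or_ne n 0 with rfl | hn
  · simp [successProb, sq_nonneg]
  · calc successProb φ P ≤ 1 / (n : ℝ) ^ 2 * (κ ^ 2 * n ^ 2) :=
          mul_le_mul_of_nonneg_left hbound (by positivity)
      _ = κ ^ 2 := by field_simp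

section Fourier

variable {n : ℕ}

lemma two_le_of_fin_ne {i j : Fin n} (h : i ≠ j) : 2 ≤ n := by
  have := i.isLt; have := j.isLt; have := Fin.val_ne_of_ne h; omega

lemma abs_ite_one_neg_one_div (i j : Fin n) (c : ℝ) :
    |(if i < j then 1 else -1) / c| = |1 / c| := by
  split_ifs <;> simp [neg_div]

lemma fourierP_self (i : Fin n) : fourierP n i i = 0 := if_pos rfl

lemma fourierP_of_ne {i j : Fin n} (h : i ≠ j) :
    fourierP n i j = pairBlock (i, j) (j, i) (1 / 2) ((if i < j then 1 else -1) / (2 * n - 2)) +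
      pairBlock (i, i) (j, j) (1 / (2 * n - 2)) 0 := by
  simp only [fourierP, if_neg h, pairBlock, Complex.ofReal_zero, zero_smul, add_zero]
  split_ifs <;> push_cast <;> rfl

lemma ptranspose_fourierP_of_ne {i j : Fin n} (h : i ≠ j) :
    ptranspose (fourierP n i j) = pairBlock (i, j) (j, i) (1 / 2) 0 +
      pairBlock (i, i) (j, j) (1 / (2 * n - 2)) ((if i < j then 1 else -1) / (2 * n - 2)) := by
  simp only [fourierP, if_neg h, pairBlock, ptranspose_add, ptranspose_smul, ptranspose_single,
    Complex.ofReal_zero, zero_smul, add_zero]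
  split_ifs <;> push_cast <;> module

lemma fourierP_posSemidef (i j : Fin n) : (fourierP n i j).PosSemidef := by
  rcases eq_or_ne i j with rfl | h
  · rw [fourierP_self]
    exact .zero
  have hn : (2 : ℝ) ≤ n := by exact_mod_cast two_le_of_fin_ne h
  have hc : 0 < 1 / (2 * (n : ℝ) - 2) := one_div_pos.2 (by linarith)
  rw [fourierP_of_ne h]
  refine (pairBlock_posSemidef _ _ ?_).add (pairBlock_posSemidef _ _ ?_)
  · rw [abs_ite_one_neg_one_div, abs_of_pos hc]
    exact one_div_le_one_div_of_le two_pos (by linarith)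
  · rw [abs_zero]
    exact hc.le

lemma ptranspose_fourierP_posSemidef (i j : Fin n) :
    (ptranspose (fourierP n i j)).PosSemidef := by
  rcases eq_or_ne i j with rfl | h
  · rw [fourierP_self, ptranspose_zero]
    exact .zero
  have hn : (2 : ℝ) ≤ n := by exact_mod_cast two_le_of_fin_ne h
  have hc : 0 < 1 / (2 * (n : ℝ) - 2) := one_div_pos.2 (by linarith)
  rw [ptranspose_fourierP_of_ne h]
  refine (pairBlock_posSemidef _ _ (by norm_num)).add (pairBlock_posSemidef _ _ ?_)
  rw [abs_ite_one_neg_one_div, abs_of_pos hc]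

lemma sum_fourierP (hn : 2 ≤ n) : ∑ i, ∑ j, fourierP n i j = 1 := by
  set c : ℂ := 1 / (2 * n - 2) with hc
  have hnc : ((n : ℂ) - 1) * c = 1 / 2 := by
    have : (n : ℂ) - 1 ≠ 0 := by
      rw [sub_ne_zero]; norm_cast; omega
    rw [hc, show (2 * n - 2 : ℂ) = 2 * (n - 1) by ring]
    field_simp
  -- the antisymmetric part `K i j - K j i` of `fourierP n i j` cancels in the double sum
  set D : Fin n → Fin n → Matrix (Fin n × Fin n) (Fin n × Fin n) ℂ := fun i j =>
    if i = j then 0 else (1 / 2 : ℂ) • single (i, j) (i, j) 1 + c • single (i, i) (i, i) 1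
  set K : Fin n → Fin n → Matrix (Fin n × Fin n) (Fin n × Fin n) ℂ := fun i j =>
    if i < j then c • (single (i, j) (j, i) 1 + single (j, i) (i, j) 1) else 0
  have hsplit (i j : Fin n) : fourierP n i j = D i j + D j i + (K i j - K j i) := by
    rcases lt_trichotomy i j with hij | rfl | hij
    · simp only [fourierP, D, K, hij, hij.ne, hij.ne', not_lt_of_gt hij, if_true, if_false]
      module
    · simp [fourierP, D, K]
    · simp only [fourierP, D, K, hij, hij.ne, hij.ne', not_lt_of_gt hij, if_true, if_false]
      module
  have hD (i : Fin n) : (2 : ℂ) • ∑ j, D i j = ∑ j, single (i, j) (i, j) 1 := by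
    simp only [D, Fintype.sum_ite_eq_zero_else, Finset.sum_add_distrib, ← Finset.smul_sum,
      Finset.sum_const, Finset.card_univ, Fintype.card_fin]
    rw [← Nat.cast_smul_eq_nsmul ℂ]
    linear_combination (norm := module) (2 : ℂ) • hnc • single (i, i) (i, i) (1 : ℂ)
  calc ∑ i, ∑ j, fourierP n i j
      = ∑ i, ∑ j, D i j + ∑ i, ∑ j, D j i + (∑ i, ∑ j, K i j - ∑ i, ∑ j, K j i) := by
        simp only [hsplit, Finset.sum_add_distrib, Finset.sum_sub_distrib]
    _ = ∑ i, (2 : ℂ) • ∑ j, D i j := by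
        rw [Finset.sum_comm (f := fun i j => D j i), Finset.sum_comm (f := fun i j => K j i)]
        simp only [two_smul, Finset.sum_add_distrib, sub_self, add_zero]
    _ = 1 := by
        simp only [hD]
        rw [← Fintype.sum_prod_type', sum_single_one]

lemma ldoiBasis_halfA_of_ne (U : Matrix (Fin n) (Fin n) ℂ) {i j : Fin n} (h : i ≠ j) :
    ldoiBasis U (halfA n) i j =
      Pi.single (i, j) ((if i < j then 1 else -1) * ((Real.sqrt 2 : ℝ) : ℂ)⁻¹) +
        Pi.single (j, i) ((Real.sqrt 2 : ℝ) : ℂ)⁻¹ := by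
  have hji : ((j, i) : Fin n × Fin n) ≠ (i, j) := by simp [h]
  ext p
  rcases h.lt_or_gt with hij | hij
  · by_cases hp : p = (i, j)
    · subst hp; simp [ldoiBasis, h, hij, hji.symm, halfA]
    · simp [ldoiBasis, h, hij, hp, halfA, Pi.single_apply]
  · by_cases hp : p = (i, j)
    · subst hp; simp [ldoiBasis, h, hji.symm, not_lt_of_gt hij, halfA]
    · simp [ldoiBasis, h, hp, not_lt_of_gt hij, halfA, Pi.single_apply]

lemma norm_fourierU (i k : Fin n) : ‖fourierU n i k‖ = (Real.sqrt n)⁻¹ := by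
  have hz : 2 * (Real.pi : ℂ) * Complex.I * ((i : ℕ) : ℂ) * ((k : ℕ) : ℂ) / n
      = ((2 * Real.pi * (i : ℕ) * (k : ℕ) / n : ℝ) : ℂ) * Complex.I := by
    push_cast
    ring
  rw [fourierU, hz, norm_div, Complex.norm_exp_ofReal_mul_I, Complex.norm_real, Real.norm_eq_abs,
    abs_of_nonneg (Real.sqrt_nonneg _), one_div]

lemma norm_ldoiBasis_fourier (i j a b : Fin n) :
    ‖ldoiBasis (fourierU n) (halfA n) i j (a, b)‖ =
      if i = j then (if a = b then (Real.sqrt n)⁻¹ else 0)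
      else if (a = i ∧ b = j) ∨ (a = j ∧ b = i) then (Real.sqrt 2)⁻¹ else 0 := by
  rcases eq_or_ne i j with rfl | h
  · by_cases hab : a = b <;> simp [ldoiBasis, hab, norm_fourierU]
  · rw [ldoiBasis_halfA_of_ne _ h]
    by_cases h₁ : a = i ∧ b = j
    · obtain ⟨rfl, rfl⟩ := h₁
      simp [h, Ne.symm h, apply_ite norm]
    by_cases h₂ : a = j ∧ b = i
    · obtain ⟨rfl, rfl⟩ := h₂
      simp [h, Ne.symm h]
    simp [h, h₁, h₂]

lemma norm_ldoiBasis_fourier_swap (i j a b : Fin n) :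
    ‖ldoiBasis (fourierU n) (halfA n) i j (b, a)‖ =
      ‖ldoiBasis (fourierU n) (halfA n) i j (a, b)‖ := by
  rw [norm_ldoiBasis_fourier, norm_ldoiBasis_fourier]
  split_ifs <;> first | rfl | (exfalso; tauto)

lemma sum_norm_ldoiBasis_fourier_le (hn : 2 ≤ n) (i j b : Fin n) :
    ∑ a, ‖ldoiBasis (fourierU n) (halfA n) i j (a, b)‖ ≤ (Real.sqrt 2)⁻¹ := by
  simp only [norm_ldoiBasis_fourier]
  rcases eq_or_ne i j with rfl | h
  · simp only [if_true, Finset.sum_ite_eq', Finset.mem_univ]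
    exact inv_anti₀ (by positivity) (Real.sqrt_le_sqrt (by exact_mod_cast hn))
  · by_cases hbj : b = j
    · subst hbj
      simp [h, Ne.symm h]
    · by_cases hbi : b = i
      · subst hbi
        simp [h]
      · simp [h, hbi, hbj]

lemma star_dotProduct_fourierP_mulVec_ldoiBasis {i j : Fin n} (h : i ≠ j) :
    star (ldoiBasis (fourierU n) (halfA n) i j) ⬝ᵥ
        (fourierP n i j *ᵥ ldoiBasis (fourierU n) (halfA n) i j) = (n : ℂ) / (2 * n - 2) := by
  have hn : (n : ℂ) - 1 ≠ 0 := by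
    have := two_le_of_fin_ne h
    rw [sub_ne_zero]; norm_cast; omega
  set t : ℂ := ((Real.sqrt 2 : ℝ) : ℂ)⁻¹
  have ht : star t * t = 1 / 2 := by
    rw [Complex.star_def, map_inv₀, Complex.conj_ofReal, ← mul_inv, ← Complex.ofReal_mul,
      Real.mul_self_sqrt zero_le_two]
    norm_num
  have hφ := ldoiBasis_halfA_of_ne (fourierU n) h
  have h₁ : ldoiBasis (fourierU n) (halfA n) i j (i, j) = (if i < j then 1 else -1) * t := by
    simp [hφ, h, t]
  have h₂ : ldoiBasis (fourierU n) (halfA n) i j (j, i) = t := by simp [hφ, h, t]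
  have h₃ : ldoiBasis (fourierU n) (halfA n) i j (i, i) = 0 := by simp [hφ, h]
  have h₄ : ldoiBasis (fourierU n) (halfA n) i j (j, j) = 0 := by simp [hφ, Ne.symm h]
  rw [fourierP_of_ne h, add_mulVec, dotProduct_add, star_dotProduct_pairBlock_mulVec,
    star_dotProduct_pairBlock_mulVec, h₁, h₂, h₃, h₄]
  push_cast
  rw [show (2 * n - 2 : ℂ) = 2 * (n - 1) by ring]
  split_ifs <;>
  · simp only [star_neg, one_mul, neg_mul, mul_neg, neg_neg, star_zero, mul_zero, add_zero, ht,
      Complex.ofReal_one, Complex.ofReal_neg]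
    field_simp
    ring

lemma successProb_fourierP (hn : 2 ≤ n) :
    successProb (ldoiBasis (fourierU n) (halfA n)) (fourierP n) = 1 / 2 := by
  have hn' : (n : ℝ) - 1 ≠ 0 := by
    rw [sub_ne_zero]; norm_cast; omega
  have hterm (i j : Fin n) :
      (star (ldoiBasis (fourierU n) (halfA n) i j) ⬝ᵥ
        (fourierP n i j *ᵥ ldoiBasis (fourierU n) (halfA n) i j)).re =
      if i = j then 0 else (n : ℝ) / (2 * n - 2) := by
    rcases eq_or_ne i j with rfl | h
    · simp [fourierP_self]
    · rw [star_dotProduct_fourierP_mulVec_ldoiBasis h, if_neg h]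
      norm_cast
  simp only [successProb, hterm, Fintype.sum_ite_eq_zero_else, Finset.sum_const,
    Finset.card_univ, Fintype.card_fin, nsmul_eq_mul]
  rw [show (2 * n - 2 : ℝ) = 2 * (n - 1) by ring]
  field_simp

lemma successProb_fourier_le (hn : 2 ≤ n)
    {P : Fin n → Fin n → Matrix (Fin n × Fin n) (Fin n × Fin n) ℂ}
    (hsum : ∑ i, ∑ j, P i j = 1) (hP : ∀ i j, (ptranspose (P i j)).PosSemidef) :
    successProb (ldoiBasis (fourierU n) (halfA n)) P ≤ 1 / 2 := by
  have hκ : (Real.sqrt 2)⁻¹ ^ 2 = 1 / 2 := by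
    rw [inv_pow, Real.sq_sqrt zero_le_two, one_div]
  refine hκ ▸ successProb_le_of_ptranspose hsum hP (sum_norm_ldoiBasis_fourier_le hn)
    fun i j a => ?_
  simpa only [norm_ldoiBasis_fourier_swap] using sum_norm_ldoiBasis_fourier_le hn i j a

end Fourier

/-- For `n ≥ 3`, the Fourier-basis LDOI ensemble (with `a_{i,j} = 1/√2` for `i ≠ j`):
`(P_{i,j})` is a PPT POVM, `⟨φ_{i,j}, P_{i,j} φ_{i,j}⟩ = n/(2n−2)` for all `i ≠ j`, its
success probability for the uniform ensemble equals exactly `1/2`, and every PPT POVM has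
success probability at most `1/2`. -/
theorem fourier_ppt_value (n : ℕ) (hn : 3 ≤ n) :
    (∀ i j : Fin n, (fourierP n i j).PosSemidef) ∧
    (∑ i, ∑ j, fourierP n i j = 1) ∧
    (∀ i j : Fin n, (ptranspose (fourierP n i j)).PosSemidef) ∧
    (∀ i j : Fin n, i ≠ j →
      star (ldoiBasis (fourierU n) (halfA n) i j) ⬝ᵥ
          (fourierP n i j *ᵥ ldoiBasis (fourierU n) (halfA n) i j) =
        (n : ℂ) / (2 * (n : ℂ) - 2)) ∧
    ((1 / (n : ℝ) ^ 2) *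
        ∑ i, ∑ j, (star (ldoiBasis (fourierU n) (halfA n) i j) ⬝ᵥ
          (fourierP n i j *ᵥ ldoiBasis (fourierU n) (halfA n) i j)).re = 1 / 2) ∧
    (∀ P : Fin n → Fin n → Matrix (Fin n × Fin n) (Fin n × Fin n) ℂ,
      (∀ i j, (P i j).PosSemidef) → (∑ i, ∑ j, P i j = 1) →
      (∀ i j, (ptranspose (P i j)).PosSemidef) →
      (1 / (n : ℝ) ^ 2) *
          ∑ i, ∑ j, (star (ldoiBasis (fourierU n) (halfA n) i j) ⬝ᵥ
            (P i j *ᵥ ldoiBasis (fourierU n) (halfA n) i j)).re ≤ 1 / 2) := by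
  have hn₂ : 2 ≤ n := by omega
  exact ⟨fourierP_posSemidef, sum_fourierP hn₂, ptranspose_fourierP_posSemidef,
    fun i j h => star_dotProduct_fourierP_mulVec_ldoiBasis h, successProb_fourierP hn₂,
    fun P _ hsum hPPT => successProb_fourier_le hn₂ hsum hPPT⟩
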